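/- For indices i, j with j ≤ i, the real function f(t) = ℓ(μ, B(t)), where B(t) is B with its (i,j)-entry replaced by t, is twice differentiable at t = B_{ij} and its second derivative equals −𝟙_{i=j}/B_{ii}² − r_j², where 𝟙_{i=j} is 1 if i = j and 0 otherwise and r_j = y_j − μ_j. -/

import Mathlib

open Matrix

/-- Multivariate Gaussian log-likelihood in the Cholesky precision parametrization
`Ω = Bᵀ B`: `ℓ(μ, B) = -(D/2)·log(2π) + log(det B) - (1/2)·‖B(y-μ)‖²`. -/
noncomputable def gaussCholLL (D : ℕ) (y μ : Fin D → ℝ)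
    (B : Matrix (Fin D) (Fin D) ℝ) : ℝ :=
  -((D : ℝ) / 2) * Real.log (2 * Real.pi) + Real.log B.det
    - (1 / 2) * ∑ k, (B.mulVec (y - μ) k) ^ 2

/-- The matrix `B` with its `(i,j)`-entry replaced by `t`. -/
def updEntry {D : ℕ} (B : Matrix (Fin D) (Fin D) ℝ) (i j : Fin D) (t : ℝ) :
    Matrix (Fin D) (Fin D) ℝ :=
  Matrix.of fun k l => if k = i ∧ l = j then t else B k l

/-
Changing the entry `t = B i j` changes only the coordinate `(B r)ᵢ`, affinely in `t`, and, as `B`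
stays triangular, its determinant is the product of the diagonal, in which `t` occurs only when
`i = j`. Hence `t ↦ ℓ(μ, B(t))` is, up to constants, `log t - ((B r)ᵢ + (t - B i j) r_j)² / 2`
when `i = j`, and the same without the logarithm when `j < i`.
-/

theorem hasDerivAt_deriv_of_eventually_hasDerivAt {𝕜 F : Type*} [NontriviallyNormedField 𝕜]
    [NormedAddCommGroup F] [NormedSpace 𝕜 F] {f f' : 𝕜 → F} {f'' : F} {x : 𝕜}
    (hf : ∀ᶠ t in nhds x, HasDerivAt f (f' t) t) (hf' : HasDerivAt f' f'' x) :
    (∀ᶠ t in nhds x, DifferentiableAt 𝕜 f t) ∧ HasDerivAt (deriv f) f'' x :=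
  ⟨hf.mono fun _ ht => ht.differentiableAt,
    hf'.congr_of_eventuallyEq (hf.mono fun _ ht => ht.deriv)⟩

namespace updEntry

variable {D : ℕ} (B : Matrix (Fin D) (Fin D) ℝ) (i j : Fin D) (t : ℝ)

theorem eq_add_single : updEntry B i j t = B + Matrix.single i j (t - B i j) := by
  ext k l
  simp only [updEntry, of_apply, Matrix.add_apply, single_apply]
  split_ifs <;> grind

theorem mulVec (v : Fin D → ℝ) :
    updEntry B i j t *ᵥ v = Function.update (B *ᵥ v) i ((B *ᵥ v) i + (t - B i j) * v j) := by
  ext k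
  rcases eq_or_ne k i with rfl | hk
  · simp [eq_add_single, add_mulVec, single_mulVec]
  · simp [eq_add_single, add_mulVec, single_mulVec, hk]

theorem sum_sq_mulVec (v : Fin D → ℝ) :
    ∑ k, (updEntry B i j t *ᵥ v) k ^ 2
      = ((B *ᵥ v) i + (t - B i j) * v j) ^ 2 + ∑ k ∈ {i}ᶜ, (B *ᵥ v) k ^ 2 := by
  rw [mulVec, Fintype.sum_eq_add_sum_compl i, Function.update_self]
  congr 1
  refine Finset.sum_congr rfl fun k hk => ?_
  rw [Function.update_of_ne (by simpa using hk)]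

variable {B i j}

theorem isLowerTriangular (hB : B.IsLowerTriangular) (hji : j ≤ i) :
    (updEntry B i j t).IsLowerTriangular := by
  intro k l hlk
  have hne : ¬(k = i ∧ l = j) := by
    rintro ⟨rfl, rfl⟩
    exact not_le_of_gt hlk hji
  simpa [updEntry, hne] using hB hlk

theorem det (hB : B.IsLowerTriangular) (hji : j ≤ i) :
    (updEntry B i j t).det = (if i = j then t else B i i) * ∏ k ∈ {i}ᶜ, B k k := by
  rw [det_of_isLowerTriangular _ (isLowerTriangular t hB hji), Fintype.prod_eq_mul_prod_compl i]
  congr 1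
  · simp [updEntry]
  · refine Finset.prod_congr rfl fun k hk => ?_
    simp [updEntry, show k ≠ i by simpa using hk]

theorem hasDerivAt_log_det (hB : B.IsLowerTriangular) (hdiag : ∀ k, 0 < B k k) (hji : j ≤ i) :
    ∀ᶠ t in nhds (B i j),
      HasDerivAt (fun t => Real.log (updEntry B i j t).det) (if i = j then t⁻¹ else 0) t := by
  have hP : 0 < ∏ k ∈ {i}ᶜ, B k k := Finset.prod_pos fun k _ => hdiag k
  simp only [det _ hB hji]
  rcases eq_or_ne i j with rfl | hij
  · filter_upwards [eventually_gt_nhds (hdiag i)] with t ht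
    simp only [if_true]
    refine (((hasDerivAt_id t).mul_const _).log (by positivity)).congr_deriv ?_
    simp only [id]
    field_simp
  · simpa only [if_neg hij] using Filter.Eventually.of_forall fun t => hasDerivAt_const t _

variable (B i j)

theorem hasDerivAt_sum_sq_mulVec (v : Fin D → ℝ) :
    HasDerivAt (fun t => ∑ k, (updEntry B i j t *ᵥ v) k ^ 2)
      (2 * ((B *ᵥ v) i + (t - B i j) * v j) * v j) t := by
  simp only [sum_sq_mulVec]
  refine ((((((hasDerivAt_id t).sub_const (B i j)).mul_const (v j)).const_add
    ((B *ᵥ v) i)).pow 2).add_const _).congr_deriv ?_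
  simp only [id]
  ring

end updEntry

theorem gaussChol_deriv2_B_general (D : ℕ) (y μ : Fin D → ℝ)
    (B : Matrix (Fin D) (Fin D) ℝ)
    (hLT : ∀ k l : Fin D, k < l → B k l = 0)
    (hdiag : ∀ k, 0 < B k k) (i j : Fin D) (hji : j ≤ i) :
    (∀ᶠ t in nhds (B i j),
        DifferentiableAt ℝ (fun t : ℝ => gaussCholLL D y μ (updEntry B i j t)) t) ∧
      HasDerivAt (deriv (fun t : ℝ => gaussCholLL D y μ (updEntry B i j t)))
        (-(if i = j then ((B i i) ^ 2)⁻¹ else 0) - (y j - μ j) ^ 2)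
        (B i j) := by
  have hB : B.IsLowerTriangular := fun k l h => hLT k l h
  refine hasDerivAt_deriv_of_eventually_hasDerivAt (f' := fun t =>
    (if i = j then t⁻¹ else 0) - ((B *ᵥ (y - μ)) i + (t - B i j) * (y j - μ j)) * (y j - μ j)) ?_ ?_
  · filter_upwards [updEntry.hasDerivAt_log_det hB hdiag hji] with t hlog
    have hsq := updEntry.hasDerivAt_sum_sq_mulVec B i j t (y - μ)
    refine ((hlog.const_add _).sub (hsq.const_mul (1 / 2))).congr_deriv ?_
    simp only [Pi.sub_apply]
    ring
  · have hinv : HasDerivAt (fun t => if i = j then t⁻¹ else 0)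
        (-(if i = j then (B i i ^ 2)⁻¹ else 0)) (B i j) := by
      rcases eq_or_ne i j with rfl | hij
      · simpa using hasDerivAt_inv (hdiag i).ne'
      · simpa [hij] using hasDerivAt_const (B i j) (0 : ℝ)
    refine (hinv.sub (((((hasDerivAt_id (B i j)).sub_const (B i j)).mul_const
      (y j - μ j)).const_add ((B *ᵥ (y - μ)) i)).mul_const (y j - μ j))).congr_deriv ?_
    ring

/-- Second partial derivative of the Gaussian log-likelihood with respect to the entry
`B_{ij}` (with `j ≤ i`): the map `t ↦ ℓ(μ, B(t))` is twice differentiable at `t = B i j`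
and its second derivative equals `-𝟙_{i=j}/B_{ii}² - r_j²` where `r = y - μ`. -/
theorem gaussChol_deriv2_B (D : ℕ) (hD : 1 ≤ D) (y μ : Fin D → ℝ)
    (B : Matrix (Fin D) (Fin D) ℝ)
    (hLT : ∀ k l : Fin D, k < l → B k l = 0)
    (hdiag : ∀ k, 0 < B k k) (i j : Fin D) (hji : j ≤ i) :
    (∀ᶠ t in nhds (B i j),
        DifferentiableAt ℝ (fun t : ℝ => gaussCholLL D y μ (updEntry B i j t)) t) ∧
      HasDerivAt (deriv (fun t : ℝ => gaussCholLL D y μ (updEntry B i j t)))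
        (-(if i = j then ((B i i) ^ 2)⁻¹ else 0) - (y j - μ j) ^ 2)
        (B i j) :=
  gaussChol_deriv2_B_general D y μ B hLT hdiag i j hji
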